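/- Let 1 ≤ L ≤ M, let μ_1, ..., μ_L be pairwise distinct positive real numbers and t_1, ..., t_M be pairwise distinct positive real numbers. Then the L × M real matrix J with entries J(i, j) = (1 − exp(−μ_i · t_j)) / μ_i has rank L, i.e., its rows are linearly independent (equivalently, its columns span ℝ^L). -/

import Mathlib

set_option autoImplicit false

/-!
A vanishing combination `∑ g i • row i` is the function `u ↦ ∑ g i (1 - exp (-μ i u)) / μ i`
evaluated at the `t j`. This is an exponential sum with the `L + 1` distinct exponents
`0, -μ 0, …, -μ (L - 1)`, and it vanishes at the `M + 1 ≥ L + 1` points `0, t 0, …`.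
By Rolle's theorem an exponential sum with `n` distinct exponents and `n` zeros is identically
zero: after multiplying by `exp (-l 0 * u)`, the derivative is a sum with `n - 1` exponentials
and, between consecutive zeros, `n - 1` zeros.
-/

open Real Finset

theorem exists_finset_card_le_succ_of_hasDerivAt {f f' : ℝ → ℝ}
    (hf : ∀ x, HasDerivAt f (f' x) x) {s : Finset ℝ} (hs : ∀ x ∈ s, f x = 0) :
    ∃ t : Finset ℝ, #s ≤ #t + 1 ∧ ∀ y ∈ t, f' y = 0 := by
  have rolle : ∀ x y, ∃ z, x ∈ s → y ∈ s → x < y → z ∈ Set.Ioo x y ∧ f' z = 0 := by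
    intro x y
    by_cases hxy : x ∈ s ∧ y ∈ s ∧ x < y
    · obtain ⟨hx, hy, hlt⟩ := hxy
      obtain ⟨z, hz, hz0⟩ := exists_hasDerivAt_eq_zero hlt
        (HasDerivAt.continuousOn fun u _ => hf u) (by rw [hs x hx, hs y hy]) fun u _ => hf u
      exact ⟨z, fun _ _ _ => ⟨hz, hz0⟩⟩
    · exact ⟨0, fun hx hy hlt => absurd ⟨hx, hy, hlt⟩ hxy⟩
  choose r hr using rolle
  refine ⟨((s ×ˢ s).filter fun p => p.1 < p.2).image fun p => r p.1 p.2, ?_, ?_⟩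
  · refine card_le_of_interleaved fun x hx y hy hxy _ => ⟨r x y, ?_, hr x y hx hy hxy |>.1⟩
    exact mem_image_of_mem _ (mem_filter.2 ⟨mem_product.2 ⟨hx, hy⟩, hxy⟩ : (x, y) ∈ _)
  · simp only [mem_image, mem_filter, mem_product, Prod.exists]
    rintro _ ⟨x, y, ⟨⟨hx, hy⟩, hxy⟩, rfl⟩
    exact (hr x y hx hy hxy).2

theorem hasDerivAt_sum_mul_exp {ι : Type*} [Fintype ι] (a c : ι → ℝ) (u : ℝ) :
    HasDerivAt (fun v => ∑ i, a i * exp (c i * v)) (∑ i, a i * c i * exp (c i * u)) u := by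
  refine HasDerivAt.fun_sum fun i _ => ?_
  have h := (((hasDerivAt_id' u).const_mul (c i)).exp).const_mul (a i)
  rw [mul_one] at h
  exact h.congr_deriv (by ring)

theorem eq_zero_of_forall_mem_sum_mul_exp_eq_zero {n : ℕ} {l : Fin n → ℝ}
    (hl : Function.Injective l) {a : Fin n → ℝ} {s : Finset ℝ} (hs : n ≤ #s)
    (h : ∀ x ∈ s, ∑ i, a i * exp (l i * x) = 0) : a = 0 := by
  induction n generalizing s with
  | zero => exact Subsingleton.elim _ _
  | succ n ih =>
    have shifted : ∀ x ∈ s, ∑ i, a i * exp ((l i - l 0) * x) = 0 := by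
      intro x hx
      have : ∑ i, a i * exp ((l i - l 0) * x) = exp (-(l 0 * x)) * ∑ i, a i * exp (l i * x) := by
        rw [mul_sum]
        refine sum_congr rfl fun i _ => ?_
        rw [sub_mul, sub_eq_add_neg, exp_add]
        ring
      rw [this, h x hx, mul_zero]
    obtain ⟨t, hst, ht⟩ :=
      exists_finset_card_le_succ_of_hasDerivAt (hasDerivAt_sum_mul_exp a _) shifted
    have hgap : ∀ i : Fin n, l i.succ - l 0 ≠ 0 := fun i =>
      sub_ne_zero.2 (hl.ne (Fin.succ_ne_zero i))
    have tail : (fun i : Fin n => a i.succ * (l i.succ - l 0)) = 0 := by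
      refine ih (l := fun i => l i.succ - l 0) (s := t)
        (fun i j hij => Fin.succ_injective n (hl (sub_left_inj.1 hij))) (by omega) fun y hy => ?_
      simpa only [Fin.sum_univ_succ, sub_self, mul_zero, zero_mul, zero_add] using ht y hy
    have hsucc : ∀ i : Fin n, a i.succ = 0 := fun i =>
      (mul_eq_zero.1 (congrFun tail i)).resolve_right (hgap i)
    obtain ⟨x, hx⟩ : s.Nonempty := card_pos.1 (by omega)
    have h0 : a 0 = 0 := by
      have := h x hx
      simp only [Fin.sum_univ_succ, hsucc, zero_mul, sum_const_zero, add_zero] at this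
      exact (mul_eq_zero.1 this).resolve_right (exp_ne_zero _)
    funext i
    exact Fin.cases h0 hsucc i

theorem linearIndependent_row_one_sub_exp_div {L : ℕ} {κ : Type*} [Fintype κ] {μ : Fin L → ℝ}
    {t : κ → ℝ} (hμ : Function.Injective μ) (ht : Function.Injective t) (hμ0 : ∀ i, μ i ≠ 0)
    (ht0 : ∀ j, t j ≠ 0) (hLκ : L ≤ Fintype.card κ) :
    LinearIndependent ℝ (Matrix.of fun i j => (1 - exp (-μ i * t j)) / μ i).row := by
  rw [Fintype.linearIndependent_iff]
  intro g hg
  set c : Fin (L + 1) → ℝ := Fin.cons (∑ i, g i / μ i) fun i => -(g i / μ i)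
  set l : Fin (L + 1) → ℝ := Fin.cons 0 fun i => -μ i
  have hexp : ∀ u, ∑ i, g i * ((1 - exp (-μ i * u)) / μ i) = ∑ i, c i * exp (l i * u) := by
    intro u
    simp only [c, l, Fin.sum_univ_succ, Fin.cons_zero, Fin.cons_succ, zero_mul, exp_zero, mul_one,
      ← sum_add_distrib]
    refine sum_congr rfl fun i _ => ?_
    ring
  have hzero : ∀ u ∈ insert 0 (univ.image t), ∑ i, c i * exp (l i * u) = 0 := by
    simp only [← hexp, mem_insert, mem_image, mem_univ, true_and]
    rintro u (rfl | ⟨j, rfl⟩)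
    · simp
    · simpa [Matrix.row, Finset.sum_apply] using congrFun hg j
  have hcard : L + 1 ≤ #(insert 0 (univ.image t)) := by
    rw [card_insert_of_notMem (by simpa using ht0), card_image_of_injective _ ht, card_univ]
    omega
  have hl : Function.Injective l :=
    Fin.cons_injective_of_injective (by simpa using hμ0) (neg_injective.comp hμ)
  intro i
  simpa [c, hμ0 i] using congrFun (eq_zero_of_forall_mem_sum_mul_exp_eq_zero hl hcard hzero) i.succ

theorem one_sub_exp_div_matrix_rank_eq_general (L M : ℕ) (hLM : L ≤ M)
    (μ : Fin L → ℝ) (t : Fin M → ℝ) (hμ : Function.Injective μ) (ht : Function.Injective t)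
    (hμpos : ∀ i, 0 < μ i) (htpos : ∀ j, 0 < t j) :
    (Matrix.of fun (i : Fin L) (j : Fin M) =>
      (1 - Real.exp (-μ i * t j)) / μ i).rank = L := by
  rw [(linearIndependent_row_one_sub_exp_div hμ ht (fun i => (hμpos i).ne')
    (fun j => (htpos j).ne') (by simpa using hLM)).rank_matrix, Fintype.card_fin]

/-- The `L × M` matrix `J(i,j) = (1 − exp(−μ_i · t_j)) / μ_i` with `1 ≤ L ≤ M`, pairwise
distinct positive `μ_i` and pairwise distinct positive `t_j`, has full row rank `L`. -/
theorem one_sub_exp_div_matrix_rank_eq (L M : ℕ) (hL : 1 ≤ L) (hLM : L ≤ M)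
    (μ : Fin L → ℝ) (t : Fin M → ℝ) (hμ : Function.Injective μ) (ht : Function.Injective t)
    (hμpos : ∀ i, 0 < μ i) (htpos : ∀ j, 0 < t j) :
    (Matrix.of fun (i : Fin L) (j : Fin M) =>
      (1 - Real.exp (-μ i * t j)) / μ i).rank = L :=
  one_sub_exp_div_matrix_rank_eq_general L M hLM μ t hμ ht hμpos htpos
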